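/- arXiv:1310.8643 — 6 statements merged into one kernel-verified Lean document; each statement's English description precedes it below -/
import Mathlib

section
/- Fix $n \ge 2$ and consider the system of equations in complex variables $z_1, \dots, z_{n-1}$: $z_k^2 = \tfrac{1}{2} z_k (z_{k-1} + z_{k+1})$ for $k = 1, \dots, n-1$, where by convention $z_0 = z_n = 0$. Then the only solution in $\mathbb{C}^{n-1}$ is $z_1 = z_2 = \cdots = z_{n-1} = 0$. -/
/-!
If some `z k` were nonzero, pick `m` with `‖z m‖` maximal among `z 0, …, z n`; then `z m ≠ 0`
forces `0 < m < n`, and cancelling `z m` in its equation shows that `z m` is the midpoint of its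
two neighbours, which are no longer than `z m`. By strict convexity of `ℂ` both neighbours equal
`z m`, and walking down from `m` gives `z 0 = z m ≠ 0`, a contradiction.
-/

open Finset

theorem eq_of_add_eq_add_self_of_norm_le {E : Type*} [NormedAddCommGroup E] [NormedSpace ℝ E]
    [StrictConvexSpace ℝ E] {a b c : E} (h : a + b = c + c) (ha : ‖a‖ ≤ ‖c‖) (hb : ‖b‖ ≤ ‖c‖) :
    a = c := by
  have hsum : ‖a + b‖ = ‖c‖ + ‖c‖ := by
    rw [h, ← two_smul ℝ c, norm_smul, Real.norm_two, two_mul]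
  have htri := norm_add_le a b
  have hac : ‖a‖ = ‖c‖ := by linarith
  have hab : a = b := eq_of_norm_eq_of_norm_add_eq (by linarith) (by linarith)
  subst hab
  rw [← two_smul ℝ a, ← two_smul ℝ c] at h
  exact smul_right_injective E two_ne_zero h

theorem add_eq_add_self_of_sq_eq_half_mul {K : Type*} [Field K] {a b c : K} (hc : c ≠ 0)
    (h : c ^ 2 = 1 / 2 * c * (a + b)) : a + b = c + c := by
  have hc' : c = 1 / 2 * (a + b) :=
    mul_left_cancel₀ hc (by linear_combination h)
  by_cases h2 : (2 : K) = 0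
  -- `1 / 2 = 0` in characteristic two, so `hc'` says `c = 0`
  · exact absurd (by simpa [h2] using hc') hc
  · rw [hc']
    field_simp
    ring

theorem eq_of_le_of_norm_le_of_add_eq {E : Type*} [NormedAddCommGroup E] [NormedSpace ℝ E]
    [StrictConvexSpace ℝ E] {z : ℕ → E} {m n : ℕ} (hmn : m < n)
    (hmax : ∀ j ≤ n, ‖z j‖ ≤ ‖z m‖)
    (hmid : ∀ i < m, z (i + 1) = z m → z i + z (i + 2) = z (i + 1) + z (i + 1))
    {j : ℕ} (hj : j ≤ m) : z j = z m := by
  induction hj using Nat.decreasingInduction with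
  | self => rfl
  | of_succ i hi ih =>
    have hnorm : ‖z m‖ = ‖z (i + 1)‖ := by rw [ih]
    rw [← ih]
    exact eq_of_add_eq_add_self_of_norm_le (hmid i hi ih)
      (hnorm ▸ hmax i (by omega)) (hnorm ▸ hmax (i + 2) (by omega))

theorem peterson_system_only_trivial_solution_general (n : ℕ)
    (z : ℕ → ℂ) (hz0 : z 0 = 0) (hzn : z n = 0)
    (hsys : ∀ k : ℕ, 1 ≤ k → k ≤ n - 1 →
      z k ^ 2 = (1/2 : ℂ) * z k * (z (k - 1) + z (k + 1))) :
    ∀ k : ℕ, 1 ≤ k → k ≤ n - 1 → z k = 0 := by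
  obtain ⟨m, hm, hmax⟩ := exists_max_image (range (n + 1)) (‖z ·‖) nonempty_range_add_one
  simp only [mem_range, Nat.lt_succ_iff] at hm hmax
  by_cases hzm : z m = 0
  · intro k _ hk
    simpa [hzm] using hmax k (by omega)
  have hmn : m ≠ n := by rintro rfl; exact hzm hzn
  have hmid : ∀ i < m, z (i + 1) = z m → z i + z (i + 2) = z (i + 1) + z (i + 1) := by
    intro i hi hzi
    exact add_eq_add_self_of_sq_eq_half_mul (hzi ▸ hzm) (hsys (i + 1) (by omega) (by omega))
  have hzm0 := eq_of_le_of_norm_le_of_add_eq (by omega) hmax hmid (Nat.zero_le m)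
  exact absurd (hzm0 ▸ hz0) hzm

theorem peterson_system_only_trivial_solution (n : ℕ) (hn : 2 ≤ n)
    (z : ℕ → ℂ) (hz0 : z 0 = 0) (hzn : z n = 0)
    (hsys : ∀ k : ℕ, 1 ≤ k → k ≤ n - 1 →
      z k ^ 2 = (1/2 : ℂ) * z k * (z (k - 1) + z (k + 1))) :
    ∀ k : ℕ, 1 ≤ k → k ≤ n - 1 → z k = 0 :=
  peterson_system_only_trivial_solution_general n z hz0 hzn hsys
end

section
/- Let $q \ge 2$ and let $a_1,\dots,a_{q-1}, b_1,\dots,b_{q-1}$ be complex numbers; set $c_i = a_i b_i$. Suppose that for all $1 \le i \le j \le q-1$ the finite continued fraction $1 - \cfrac{c_i}{1 - \cfrac{c_{i+1}}{\ddots \, 1 - \cfrac{c_{j-1}}{1-c_j}}}$ is nonzero (equivalently, defining $u_{j+1} = 1$ and $u_i = 1 - c_i/u_{i+1}$ descending, each $u_i \neq 0$ for $i \le j$). Then the only solution in $\mathbb{C}^q$ of the system $z_1^2 = b_1 z_1 z_2$, $z_i^2 = z_i(a_{i-1} z_{i-1} + b_i z_{i+1})$ for $2 \le i \le q-1$, and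 $z_q^2 = a_{q-1} z_{q-1} z_q$, is the origin $z_1 = \cdots = z_q = 0$. -/
/-!
Extended by zero at the indices `0` and `q + 1`, `z` satisfies
`z i ^ 2 = z i * (a (i - 1) * z (i - 1) + b i * z (i + 1))` for every `1 ≤ i ≤ q`, and it
vanishes from the top down. Suppose `z (r + 1) = 0` but `z r ≠ 0`, and let `u` be the tails of the
continued fraction ending at `r`: `u r = 1`, `u i = 1 - a i * b i / u (i + 1)`. Going down from
`r`, every `z i` stays nonzero (so the system is linear there) and
`u i * z i = a (i - 1) * z (i - 1)`. At `i = 1` this reads `u 1 * z 1 = 0`, contradicting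
`u 1 ≠ 0`.
-/

/-- `contFrac c k i = 1 - c i / (1 - c (i + 1) / ( ⋯ / (1 - c (i + k - 1) / 1)))`. -/
noncomputable def contFrac {K : Type*} [Field K] (c : ℕ → K) : ℕ → ℕ → K
  | 0, _ => 1
  | k + 1, i => 1 - c i / contFrac c k (i + 1)

theorem contFrac_sub_of_lt {K : Type*} [Field K] (c : ℕ → K) {n i : ℕ} (h : i < n) :
    contFrac c (n - i) i = 1 - c i / contFrac c (n - (i + 1)) (i + 1) := by
  rw [show n - i = n - (i + 1) + 1 by omega, contFrac]

section Descent

variable {K : Type*} [Field K] {a b x u : ℕ → K}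

theorem mul_eq_of_contFrac_step {i : ℕ} (hu : u (i + 1) ≠ 0)
    (hrec : u i = 1 - a i * b i / u (i + 1))
    (hx : x i = a (i - 1) * x (i - 1) + b i * x (i + 1))
    (hnext : u (i + 1) * x (i + 1) = a i * x i) :
    u i * x i = a (i - 1) * x (i - 1) := by
  have hquot : a i * b i / u (i + 1) * x i = b i * x (i + 1) := by
    rw [div_mul_eq_mul_div, div_eq_iff hu]
    linear_combination -b i * hnext
  rw [hrec, sub_mul, one_mul, hquot, hx]
  ring

theorem eq_zero_of_succ_eq_zero {j : ℕ} (hx0 : x 0 = 0)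
    (hsys : ∀ i, 1 ≤ i → i ≤ j + 1 →
      x i ^ 2 = x i * (a (i - 1) * x (i - 1) + b i * x (i + 1)))
    (hu : u (j + 1) = 1) (hrec : ∀ i, 1 ≤ i → i ≤ j → u i = 1 - a i * b i / u (i + 1))
    (hne : ∀ i, 1 ≤ i → i ≤ j → u i ≠ 0) (hxj : x (j + 2) = 0) : x (j + 1) = 0 := by
  by_contra hxj1
  have hne' : ∀ i, 1 ≤ i → i ≤ j + 1 → u i ≠ 0 := by
    intro i hi hij
    rcases Nat.lt_or_eq_of_le hij with hij | rfl
    · exact hne i hi (by omega)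
    · exact hu ▸ one_ne_zero
  have hlin : ∀ i, 1 ≤ i → i ≤ j + 1 → x i ≠ 0 →
      x i = a (i - 1) * x (i - 1) + b i * x (i + 1) := fun i hi hij hxi =>
    mul_left_cancel₀ hxi (by rw [← pow_two]; exact hsys i hi hij)
  have hdesc : x 1 ≠ 0 ∧ u 1 * x 1 = a 0 * x 0 := by
    refine Nat.decreasingInduction' (P := fun i => x i ≠ 0 ∧ u i * x i = a (i - 1) * x (i - 1))
      ?_ (show 1 ≤ j + 1 by omega) ⟨hxj1, ?_⟩
    · rintro i hij hi ⟨hxi1, hui1⟩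
      rw [Nat.add_sub_cancel] at hui1
      have hxi : x i ≠ 0 := by
        intro hxi
        rw [hxi, mul_zero] at hui1
        exact mul_ne_zero (hne' (i + 1) (by omega) (by omega)) hxi1 hui1
      exact ⟨hxi, mul_eq_of_contFrac_step (hne' (i + 1) (by omega) (by omega))
        (hrec i hi (by omega)) (hlin i hi hij.le hxi) hui1⟩
    · simpa [hu, hxj] using hlin (j + 1) (by omega) le_rfl hxj1
  rw [hx0, mul_zero] at hdesc
  exact mul_ne_zero (hne' 1 le_rfl (by omega)) hdesc.1 hdesc.2

end Descent

theorem sq_indicator_Icc_eq_mul {R : Type*} [CommRing R] {q : ℕ} (hq : 2 ≤ q)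
    {a b z : ℕ → R}
    (h1 : z 1 ^ 2 = b 1 * z 1 * z 2)
    (hmid : ∀ i, 2 ≤ i → i ≤ q - 1 →
      z i ^ 2 = z i * (a (i - 1) * z (i - 1) + b i * z (i + 1)))
    (hq' : z q ^ 2 = a (q - 1) * z (q - 1) * z q) {i : ℕ} (hi : 1 ≤ i) (hiq : i ≤ q) :
    (Set.Icc 1 q).indicator z i ^ 2 = (Set.Icc 1 q).indicator z i *
      (a (i - 1) * (Set.Icc 1 q).indicator z (i - 1) +
        b i * (Set.Icc 1 q).indicator z (i + 1)) := by
  set x := (Set.Icc 1 q).indicator z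
  have hx_in : ∀ i, 1 ≤ i → i ≤ q → x i = z i := fun i hi hiq =>
    Set.indicator_of_mem (Set.mem_Icc.mpr ⟨hi, hiq⟩) z
  have hx_out : ∀ i, i = 0 ∨ q < i → x i = 0 := fun i hi =>
    Set.indicator_of_notMem (by simp only [Set.mem_Icc]; omega) z
  rcases Nat.lt_or_eq_of_le hi with hi | rfl
  · rcases Nat.lt_or_eq_of_le hiq with hiq | rfl
    · rw [hx_in i (by omega) hiq.le, hx_in (i - 1) (by omega) (by omega),
        hx_in (i + 1) (by omega) hiq]
      exact hmid i hi (by omega)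
    · rw [hx_in i hi.le le_rfl, hx_in (i - 1) (by omega) (by omega), hx_out (i + 1) (by omega)]
      linear_combination hq'
  · rw [hx_in 1 le_rfl (by omega), hx_in 2 (by omega) hq, hx_out 0 (by omega)]
    linear_combination h1

theorem general_system_only_trivial_solution (q : ℕ) (hq : 2 ≤ q)
    (a b : ℕ → ℂ)
    (hcf : ∀ j : ℕ, 1 ≤ j → j ≤ q - 1 → ∀ u : ℕ → ℂ,
      u (j + 1) = 1 →
      (∀ i : ℕ, 1 ≤ i → i ≤ j → u i = 1 - (a i * b i) / u (i + 1)) →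
      ∀ i : ℕ, 1 ≤ i → i ≤ j → u i ≠ 0)
    (z : ℕ → ℂ)
    (h1 : z 1 ^ 2 = b 1 * z 1 * z 2)
    (hmid : ∀ i : ℕ, 2 ≤ i → i ≤ q - 1 →
      z i ^ 2 = z i * (a (i - 1) * z (i - 1) + b i * z (i + 1)))
    (hq' : z q ^ 2 = a (q - 1) * z (q - 1) * z q) :
    ∀ i : ℕ, 1 ≤ i → i ≤ q → z i = 0 := by
  set x := (Set.Icc 1 q).indicator z
  have hx_out : ∀ i, i = 0 ∨ q < i → x i = 0 := fun i hi =>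
    Set.indicator_of_notMem (by simp only [Set.mem_Icc]; omega) z
  have hsys : ∀ i, 1 ≤ i → i ≤ q →
      x i ^ 2 = x i * (a (i - 1) * x (i - 1) + b i * x (i + 1)) := fun _ hi hiq =>
    sq_indicator_Icc_eq_mul hq h1 hmid hq' hi hiq
  have hstep : ∀ j, j + 1 ≤ q → x (j + 2) = 0 → x (j + 1) = 0 := by
    intro j hjq
    let u : ℕ → ℂ := fun i => contFrac (fun n => a n * b n) (j + 1 - i) i
    have hu : u (j + 1) = 1 := by simp [u, contFrac]
    have hrec : ∀ i, 1 ≤ i → i ≤ j → u i = 1 - a i * b i / u (i + 1) := fun i _ hij =>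
      contFrac_sub_of_lt _ (Nat.lt_succ_of_le hij)
    exact eq_zero_of_succ_eq_zero (hx_out 0 (by omega)) (fun i hi hij => hsys i hi (by omega))
      hu hrec (fun i hi hij => hcf j (by omega) (by omega) u hu hrec i hi hij)
  have hzero : ∀ i, 1 ≤ i → i ≤ q + 1 → x i = 0 := fun i hi hiq =>
    Nat.decreasingInduction' (P := fun k => x k = 0) (fun k hkq hik hk => by
      obtain ⟨j, rfl⟩ : ∃ j, k = j + 1 := ⟨k - 1, by omega⟩
      exact hstep j (by omega) hk) hiq (hx_out _ (by omega))
  intro i hi hiq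
  rw [← Set.indicator_of_mem (Set.mem_Icc.mpr ⟨hi, hiq⟩) z]
  exact hzero i hi (by omega)
end

section
/- Let $c$ be a real number with $c \le 1/4$ and let $q \ge 2$. Consider the system in $\mathbb{C}^q$ given by $z_i^2 = z_i(a z_{i-1} + b z_{i+1})$, $1 \le i \le q$, with $a = b$ real, $ab = c \le 1/4$, and $z_0 = z_{q+1} = 0$. Then the only solution is the origin. In particular, for $a = b = 1/2$ the system $z_i^2 = \tfrac12 z_i(z_{i-1}+z_{i+1})$, $1 \le i \le q$, with $z_0 = z_{q+1} = 0$, has only the trivial solution in $\mathbb{C}^q$. -/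
theorem symmetric_system_only_trivial_solution (q : ℕ) (hq : 2 ≤ q)
    (a b : ℝ) (hab : a = b) (hc : a * b ≤ 1/4)
    (z : ℕ → ℂ) (hz0 : z 0 = 0) (hzq : z (q + 1) = 0)
    (hsys : ∀ i : ℕ, 1 ≤ i → i ≤ q →
      z i ^ 2 = z i * ((a : ℂ) * z (i - 1) + (b : ℂ) * z (i + 1))) :
    ∀ i : ℕ, 1 ≤ i → i ≤ q → z i = 0 := by
  intro k hk1 hkq
  set w : ℕ → ℝ := fun i => ‖z i‖ with hw
  have hwnn : ∀ i, 0 ≤ w i := fun i => norm_nonneg _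
  have ha : |a| ≤ 1/2 := by
    subst hab
    nlinarith [abs_nonneg a, sq_abs a]
  have hw0 : w 0 = 0 := by simp [hw, hz0]
  have hwq : w (q + 1) = 0 := by simp [hw, hzq]
  have hconv : ∀ i, 1 ≤ i → i ≤ q → 2 * w i ≤ w (i - 1) + w (i + 1) := by
    intro i hi1 hiq
    have h := hsys i hi1 hiq
    have hfac : z i * (z i - ((a : ℂ) * z (i - 1) + (b : ℂ) * z (i + 1))) = 0 := by
      linear_combination h
    rcases mul_eq_zero.mp hfac with h0 | h0
    · have : w i = 0 := by simp [hw, h0]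
      rw [this]
      have := hwnn (i - 1); have := hwnn (i + 1); linarith
    · have hzi : z i = (a : ℂ) * z (i - 1) + (b : ℂ) * z (i + 1) :=
        sub_eq_zero.mp h0
      have hb : |b| ≤ 1/2 := hab ▸ ha
      have h1 : w i ≤ |a| * w (i - 1) + |b| * w (i + 1) := by
        calc w i = ‖(a : ℂ) * z (i - 1) + (b : ℂ) * z (i + 1)‖ := by
              rw [hw]; simp only; rw [hzi]
          _ ≤ ‖(a : ℂ) * z (i - 1)‖ + ‖(b : ℂ) * z (i + 1)‖ :=
              norm_add_le _ _
          _ = |a| * w (i - 1) + |b| * w (i + 1) := by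
              simp [hw, norm_mul, Complex.norm_real, Real.norm_eq_abs]
      have h2 : |a| * w (i - 1) ≤ (1/2) * w (i - 1) :=
        mul_le_mul_of_nonneg_right ha (hwnn _)
      have h3 : |b| * w (i + 1) ≤ (1/2) * w (i + 1) :=
        mul_le_mul_of_nonneg_right hb (hwnn _)
      linarith
  set d : ℕ → ℝ := fun j => w (j + 1) - w j with hd
  have hstep : ∀ j, j + 1 ≤ q → d j ≤ d (j + 1) := by
    intro j hj
    have h := hconv (j + 1) (by omega) hj
    simp only [Nat.add_sub_cancel] at h
    simp only [hd]
    linarith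
  have mono : ∀ j, j ≤ q → ∀ i, i ≤ j → d i ≤ d j := by
    intro j
    induction j with
    | zero => intro _ i hi; interval_cases i; exact le_refl _
    | succ n ih =>
      intro hj i hi
      rcases Nat.lt_or_ge i (n + 1) with h | h
      · exact le_trans (ih (by omega) i (by omega)) (hstep n hj)
      · have : i = n + 1 := by omega
        rw [this]
  have lemB : ∀ m, k + m ≤ q + 1 → w k + m * d k ≤ w (k + m) := by
    intro m
    induction m with
    | zero => intro _; simp
    | succ n ih =>
      intro hm
      have h1 := ih (by omega)
      have h2 : d k ≤ d (k + n) := mono (k + n) (by omega) k (by omega)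
      have h3 : w (k + (n + 1)) = w (k + n) + d (k + n) := by
        simp only [hd]; rw [show k + (n + 1) = k + n + 1 by omega]; ring
      push_cast
      rw [h3]
      push_cast at h1
      linarith
  have lemC : ∀ m, m ≤ k → w k ≤ w (k - m) + m * d (k - 1) := by
    intro m
    induction m with
    | zero => intro _; simp
    | succ n ih =>
      intro hm
      have h1 := ih (by omega)
      have h2 : d (k - n - 1) ≤ d (k - 1) := mono (k - 1) (by omega) (k - n - 1) (by omega)
      have h3 : w (k - n) = w (k - (n + 1)) + d (k - (n + 1)) := by
        simp only [hd]
        rw [show k - (n + 1) + 1 = k - n by omega]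
        ring
      have h4 : k - (n + 1) = k - n - 1 := by omega
      push_cast
      push_cast at h1
      rw [h3, h4] at h1
      rw [show k - (n + 1) = k - n - 1 by omega]
      linarith
  have hB := lemB (q + 1 - k) (by omega)
  rw [show k + (q + 1 - k) = q + 1 by omega, hwq] at hB
  have hC := lemC k le_rfl
  rw [Nat.sub_self, hw0] at hC
  have hdk : d (k - 1) ≤ d k := mono k hkq (k - 1) (by omega)
  have hc1 : (1 : ℝ) ≤ ((q + 1 - k : ℕ) : ℝ) := by
    have : 1 ≤ q + 1 - k := by omega
    exact_mod_cast this
  have hck : (1 : ℝ) ≤ (k : ℝ) := by exact_mod_cast hk1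
  have h5 : ((q + 1 - k : ℕ) : ℝ) * d k ≤ 0 := by linarith [hwnn k]
  have hdk0 : d k ≤ 0 := by nlinarith [h5, hc1]
  have h6 : (k : ℝ) * d (k - 1) ≤ d k := by nlinarith [hck, hdk, hdk0]
  have hwk : w k ≤ 0 := by linarith
  have : w k = 0 := le_antisymm hwk (hwnn k)
  simpa [hw] using this
end

section
/- In the polynomial ring $R = \mathbb{C}[\xi_1, \dots, \xi_{n-1}]$ (with $n \ge 2$, grading $\deg \xi_i = 2$), the sequence of elements $g_k := \xi_k(\xi_k - \tfrac12 \xi_{k-1} - \tfrac12 \xi_{k+1})$ for $k = 1, \dots, n-1$ (with the convention $\xi_0 = \xi_n = 0$) is a regular sequence. -/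
/-!
Work in `K[X 1, X 2, …]` with `ξᵢ = X i` and `ξ₀ = 0`, and let `Iₖ = (g₀, …, g_{k-1})` be the ideal
of the first `k` relations `gⱼ = ξ_{j+1} (ξ_{j+1} - ½ ξⱼ - ½ ξ_{j+2})`. Each `gₖ` is a product of
two linear forms, so it suffices that each factor is regular modulo `Iₖ`. For a linear form
`u` that is a unit times `ξₜ - a`, climb the chain `I₀ ⊆ I₁ ⊆ ⋯`: if `u` is regular modulo `Iⱼ` and
`gⱼ` is regular modulo `Iⱼ + (u)`, then `u` is regular modulo `I_{j+1}`; and modulo `u` the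
substitution `ξₜ ↦ a` fixes the earlier relations and turns the top one into a boundary relation
`ξ_{k+1} (c ξ_{k+1} - ½ ξₖ)`. Boundary relations factor the same way, and substituting
`ξ_{k+1} ↦ ξₖ / (2c)` into `gₖ₋₁` produces the boundary relation with coefficient `1 - 1/(4c)`.
Since `c ↦ 1 - 1/(4c)` maps `[1/2, 1]` into itself, the coefficient never vanishes, and a strong
induction on `k` proves regularity of all `gₖ` and all boundary relations with `c ∈ [1/2, 1]`.
Renaming `X k ↦ X (k + 1)` embeds the ring in `n - 1` variables as a retract; it sends the given
relations to `g₀, …, g_{n-3}` and, as `ξₙ = 0`, the last one to the boundary relation with `c = 1`.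
-/

open MvPolynomial

section RegularModuloIdeal

variable {R : Type*} [CommRing R]

theorem isSMulRegular_quotient_span_sup_swap {I : Ideal R} {a b : R}
    (ha : IsSMulRegular (R ⧸ I) a) (hb : IsSMulRegular (R ⧸ (Ideal.span {a} ⊔ I)) b) :
    IsSMulRegular (R ⧸ (Ideal.span {b} ⊔ I)) a := by
  rw [isSMulRegular_quotient_iff_mem_of_smul_mem] at ha hb ⊢
  intro f hf
  obtain ⟨g, i, hi, hfg⟩ := Ideal.mem_span_singleton_sup.mp hf
  have hg : b * g ∈ Ideal.span {a} ⊔ I :=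
    Ideal.mem_span_singleton_sup.mpr ⟨f, -i, I.neg_mem hi, by
      rw [smul_eq_mul] at hfg; linear_combination -hfg⟩
  obtain ⟨h, i', hi', hgh⟩ := Ideal.mem_span_singleton_sup.mp (hb g hg)
  have hfh : f - h * b ∈ I := ha _ <| by
    rw [smul_eq_mul, show a * (f - h * b) = b * i' + i by
      rw [smul_eq_mul] at hfg; linear_combination -hfg - b * hgh]
    exact I.add_mem (I.mul_mem_left b hi') hi
  exact Ideal.mem_span_singleton_sup.mpr ⟨h, _, hfh, by ring⟩

theorem isSMulRegular_quotient_span_sup_of_ringHom (κ : R →+* R) {I : Ideal R} {u g : R}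
    (hκ : ∀ x, κ x - x ∈ Ideal.span {u}) (hu : κ u = 0) (hI : I ≤ I.comap κ)
    (hg : IsSMulRegular (R ⧸ I) (κ g)) :
    IsSMulRegular (R ⧸ (Ideal.span {u} ⊔ I)) g := by
  rw [isSMulRegular_quotient_iff_mem_of_smul_mem] at hg ⊢
  intro f hf
  obtain ⟨c, i, hi, hgf⟩ := Ideal.mem_span_singleton_sup.mp hf
  have hκf : κ f ∈ I := hg _ <| by
    rw [smul_eq_mul, ← map_mul, ← smul_eq_mul, ← hgf, map_add, map_mul, hu, mul_zero, zero_add]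
    exact hI hi
  have hf' : f = -(κ f - f) + κ f := by ring
  rw [hf']
  exact Ideal.add_mem _ (Submodule.neg_mem _ (Ideal.mem_sup_left (hκ f)))
    (Ideal.mem_sup_right hκf)

theorem Ideal.span_image_Iio_add_one (f : ℕ → R) (m : ℕ) :
    Ideal.span (f '' Set.Iio (m + 1)) = Ideal.span {f m} ⊔ Ideal.span (f '' Set.Iio m) := by
  rw [Set.Iio_add_one_eq_Iic, ← Set.Iio_insert, Set.image_insert_eq, Ideal.span_insert]

theorem isSMulRegular_quotient_span_image_Iio [IsDomain R] (κ : R →+* R) {f : ℕ → R} {u : R}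
    (hu0 : u ≠ 0) (hκ : ∀ x, κ x - x ∈ Ideal.span {u}) (hu : κ u = 0) {m : ℕ}
    (hfix : ∀ i, i + 1 < m → κ (f i) = f i)
    (hreg : ∀ j < m, IsSMulRegular (R ⧸ Ideal.span (f '' Set.Iio j)) (κ (f j))) :
    IsSMulRegular (R ⧸ Ideal.span (f '' Set.Iio m)) u := by
  induction m with
  | zero =>
    rw [isSMulRegular_quotient_iff_mem_of_smul_mem]
    simp [hu0]
  | succ m ih =>
    rw [Ideal.span_image_Iio_add_one]
    refine isSMulRegular_quotient_span_sup_swap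
      (ih (fun i hi => hfix i (by omega)) (fun j hj => hreg j (by omega))) ?_
    refine isSMulRegular_quotient_span_sup_of_ringHom κ hκ hu ?_ (hreg m (by omega))
    rw [Ideal.span_le]
    rintro _ ⟨i, hi, rfl⟩
    rw [SetLike.mem_coe, Ideal.mem_comap, hfix i (by simp at hi; omega)]
    exact Ideal.subset_span ⟨i, hi, rfl⟩

theorem isSMulRegular_quotient_of_leftInverse {S : Type*} [CommRing S] (ι : R →+* S)
    (ρ : S →+* R) (hρι : Function.LeftInverse ρ ι) {I : Ideal R} {g : R}
    (h : IsSMulRegular (S ⧸ I.map ι) (ι g)) : IsSMulRegular (R ⧸ I) g := by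
  rw [isSMulRegular_quotient_iff_mem_of_smul_mem] at h ⊢
  intro f hf
  have hιf : ι f ∈ I.map ι := h _ <| by
    rw [smul_eq_mul, ← map_mul]; exact Ideal.mem_map_of_mem ι hf
  have hρι' : ρ.comp ι = RingHom.id R := RingHom.ext hρι
  simpa [hρι f, Ideal.map_map, hρι'] using Ideal.mem_map_of_mem ρ hιf

end RegularModuloIdeal

theorem MvPolynomial.aeval_update_X_sub_mem_span {σ R : Type*} [CommRing R] [DecidableEq σ]
    (t : σ) (a p : MvPolynomial σ R) :
    aeval (Function.update X t a) p - p ∈ Ideal.span {X t - a} := by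
  rw [← Ideal.Quotient.eq]
  refine congr($(algHom_ext (A := MvPolynomial σ R ⧸ Ideal.span {X t - a})
    (f := (Ideal.Quotient.mkₐ R _).comp (aeval (Function.update X t a)))
    (g := Ideal.Quotient.mkₐ R _) fun s => ?_) p)
  rcases eq_or_ne s t with rfl | hs
  · simp only [AlgHom.comp_apply, aeval_X, Function.update_self, Ideal.Quotient.mkₐ_eq_mk]
    rw [Ideal.Quotient.eq]
    exact Ideal.mem_span_singleton.mpr ⟨-1, by ring⟩
  · simp [Function.update_of_ne hs]

noncomputable section

namespace Peterson

variable {K : Type*} [Field K]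

/-- `ξᵢ`; the variable `X 0` is never used, and `var 0 = 0` encodes the convention `ξ₀ = 0`. -/
def var (i : ℕ) : MvPolynomial ℕ K := if i = 0 then 0 else X i

def rel (k : ℕ) : MvPolynomial ℕ K :=
  var (k + 1) * (var (k + 1) - C (1 / 2) * var k - C (1 / 2) * var (k + 2))

def boundaryRel (c : K) (k : ℕ) : MvPolynomial ℕ K :=
  var (k + 1) * (C c * var (k + 1) - C (1 / 2) * var k)

variable (K) in
abbrev relIdeal (k : ℕ) : Ideal (MvPolynomial ℕ K) := Ideal.span (rel '' Set.Iio k)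

def substVar (t : ℕ) (a : MvPolynomial ℕ K) : MvPolynomial ℕ K →+* MvPolynomial ℕ K :=
  (aeval (R := K) (Function.update X t a)).toRingHom

@[simp] theorem var_zero : (var 0 : MvPolynomial ℕ K) = 0 := rfl

theorem var_of_ne_zero {i : ℕ} (h : i ≠ 0) : (var i : MvPolynomial ℕ K) = X i := if_neg h

theorem eval_single_var_of_ne {t i : ℕ} (c : K) (h : i ≠ t) :
    eval (Pi.single t c) (var i) = 0 := by
  unfold var; split_ifs <;> simp [Pi.single_eq_of_ne h]

theorem eval_single_var_self {t : ℕ} (c : K) (ht : t ≠ 0) :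
    eval (Pi.single t c) (var t) = c := by
  simp [var, ht]

@[simp] theorem substVar_C (t : ℕ) (a : MvPolynomial ℕ K) (c : K) : substVar t a (C c) = C c :=
  aeval_C _ c

theorem substVar_var_of_ne {t i : ℕ} (a : MvPolynomial ℕ K) (h : i ≠ t) :
    substVar t a (var i) = var i := by
  unfold var; split_ifs <;> simp [substVar, Function.update_of_ne h]

theorem substVar_var_self {t : ℕ} (a : MvPolynomial ℕ K) (ht : t ≠ 0) :
    substVar t a (var t) = a := by
  simp [var, ht, substVar]

theorem substVar_rel_of_lt {t k : ℕ} (a : MvPolynomial ℕ K) (h : k + 2 < t) :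
    substVar t a (rel k) = rel k := by
  simp only [rel, map_mul, map_sub, substVar_C, substVar_var_of_ne a (show k ≠ t by omega),
    substVar_var_of_ne a (show k + 1 ≠ t by omega),
    substVar_var_of_ne a (show k + 2 ≠ t by omega)]

theorem substVar_rel_eq_boundaryRel (k : ℕ) (d : K) :
    substVar (k + 2) (C d * var (k + 1)) (rel k) = boundaryRel (1 - d / 2) k := by
  simp only [rel, boundaryRel, map_mul, map_sub, substVar_C,
    substVar_var_of_ne _ (show k ≠ k + 2 by omega),
    substVar_var_of_ne _ (show k + 1 ≠ k + 2 by omega),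
    substVar_var_self _ (show k + 2 ≠ 0 by omega)]
  simp only [map_one, div_eq_mul_inv, map_mul]
  ring

variable [CharZero K]

theorem isSMulRegular_of_substVar_succ {k : ℕ} {d : ℚ} (hd : d ∈ Set.Icc 0 1)
    {u : MvPolynomial ℕ K} (hu0 : u ≠ 0) (hu : substVar (k + 1) (C (d : K) * var k) u = 0)
    (hspan : X (k + 1) - C (d : K) * var k ∈ Ideal.span {u})
    (hrel : ∀ j < k, IsSMulRegular (MvPolynomial ℕ K ⧸ relIdeal K j) (rel j : MvPolynomial ℕ K))
    (hbdry : ∀ j < k, ∀ q ∈ Set.Icc (1 / 2 : ℚ) 1,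
      IsSMulRegular (MvPolynomial ℕ K ⧸ relIdeal K j) (boundaryRel (q : K) j)) :
    IsSMulRegular (MvPolynomial ℕ K ⧸ relIdeal K k) u := by
  refine isSMulRegular_quotient_span_image_Iio (substVar (k + 1) (C (d : K) * var k)) hu0
    (fun x => Ideal.span_le.mpr (Set.singleton_subset_iff.mpr hspan)
      (aeval_update_X_sub_mem_span _ _ x))
    hu (fun i hi => substVar_rel_of_lt _ (by omega)) fun j hj => ?_
  rcases Nat.lt_or_ge (j + 1) k with hjk | hjk
  · rw [substVar_rel_of_lt _ (by omega)]
    exact hrel j hj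
  · obtain rfl : k = j + 1 := by omega
    have := hbdry j hj (1 - d / 2) ⟨by linarith [hd.2], by linarith [hd.1]⟩
    push_cast at this
    rwa [substVar_rel_eq_boundaryRel]

theorem isSMulRegular_var_succ (k : ℕ)
    (hrel : ∀ j < k, IsSMulRegular (MvPolynomial ℕ K ⧸ relIdeal K j) (rel j : MvPolynomial ℕ K))
    (hbdry : ∀ j < k, ∀ q ∈ Set.Icc (1 / 2 : ℚ) 1,
      IsSMulRegular (MvPolynomial ℕ K ⧸ relIdeal K j) (boundaryRel (q : K) j)) :
    IsSMulRegular (MvPolynomial ℕ K ⧸ relIdeal K k) (var (k + 1) : MvPolynomial ℕ K) :=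
  isSMulRegular_of_substVar_succ (d := 0) (by norm_num) (X_ne_zero _)
    (by simp [substVar_var_self]) (by simp [var_of_ne_zero]) hrel hbdry

theorem isSMulRegular_rel_factor (k : ℕ)
    (hrel : ∀ j < k, IsSMulRegular (MvPolynomial ℕ K ⧸ relIdeal K j) (rel j : MvPolynomial ℕ K)) :
    IsSMulRegular (MvPolynomial ℕ K ⧸ relIdeal K k)
      (var (k + 1) - C (1 / 2) * var k - C (1 / 2) * var (k + 2) : MvPolynomial ℕ K) := by
  have hu0 :
      (var (k + 1) - C (1 / 2) * var k - C (1 / 2) * var (k + 2) : MvPolynomial ℕ K) ≠ 0 := by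
    intro h
    have := congrArg (eval (Pi.single (k + 2) (1 : K))) h
    simp [eval_single_var_of_ne, eval_single_var_self] at this
  have hC : (C (1 / 2 : K) * C 2 : MvPolynomial ℕ K) = 1 := by rw [← map_mul]; norm_num
  refine isSMulRegular_quotient_span_image_Iio (substVar (k + 2) (C 2 * var (k + 1) - var k)) hu0
    (fun x => Ideal.span_le.mpr (Set.singleton_subset_iff.mpr ?_)
      (aeval_update_X_sub_mem_span _ _ x))
    ?_ (fun i hi => substVar_rel_of_lt _ (by omega))
    fun j hj => by rw [substVar_rel_of_lt _ (by omega)]; exact hrel j hj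
  · refine Ideal.mem_span_singleton'.mpr ⟨-C 2, ?_⟩
    rw [var_of_ne_zero (show k + 2 ≠ 0 by omega)]
    linear_combination (X (k + 2) + var k) * hC
  · simp only [map_sub, map_mul, substVar_C, substVar_var_of_ne _ (show k + 1 ≠ k + 2 by omega),
      substVar_var_of_ne _ (show k ≠ k + 2 by omega),
      substVar_var_self _ (show k + 2 ≠ 0 by omega)]
    linear_combination -(var (k + 1)) * hC

theorem isSMulRegular_boundaryRel_factor (k : ℕ) {q : ℚ} (hq : q ∈ Set.Icc (1 / 2) 1)
    (hrel : ∀ j < k, IsSMulRegular (MvPolynomial ℕ K ⧸ relIdeal K j) (rel j : MvPolynomial ℕ K))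
    (hbdry : ∀ j < k, ∀ q ∈ Set.Icc (1 / 2 : ℚ) 1,
      IsSMulRegular (MvPolynomial ℕ K ⧸ relIdeal K j) (boundaryRel (q : K) j)) :
    IsSMulRegular (MvPolynomial ℕ K ⧸ relIdeal K k)
      (C (q : K) * var (k + 1) - C (1 / 2) * var k) := by
  have hq0 : (q : K) ≠ 0 := Rat.cast_ne_zero.mpr (by linarith [hq.1])
  refine isSMulRegular_of_substVar_succ (d := 1 / (2 * q)) ?_ ?_ ?_ ?_ hrel hbdry
  · have : 1 ≤ 2 * q := by linarith [hq.1]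
    exact ⟨by positivity, div_le_one_of_le₀ this (by positivity)⟩
  · intro h
    have := congrArg (eval (Pi.single (k + 1) (1 : K))) h
    simp [eval_single_var_of_ne, eval_single_var_self, hq0] at this
  · have h : (C (q : K) * C ((1 / (2 * q) : ℚ) : K) : MvPolynomial ℕ K) = C (1 / 2) := by
      rw [← map_mul]; push_cast; field_simp
    simp only [map_sub, map_mul, substVar_C, substVar_var_of_ne _ (show k ≠ k + 1 by omega),
      substVar_var_self _ (show k + 1 ≠ 0 by omega)]
    linear_combination var k * h
  · have h1 : (C (1 / q : K) * C (q : K) : MvPolynomial ℕ K) = 1 := by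
      rw [← map_mul]; field_simp; simp
    have h2 : (C (1 / q : K) * C (1 / 2) : MvPolynomial ℕ K) = C ((1 / (2 * q) : ℚ) : K) := by
      rw [← map_mul]; push_cast; field_simp
    refine Ideal.mem_span_singleton'.mpr ⟨C (1 / q), ?_⟩
    rw [var_of_ne_zero (show k + 1 ≠ 0 by omega)]
    linear_combination X (k + 1) * h1 - var k * h2

theorem isSMulRegular_rel_and_boundaryRel (k : ℕ) :
    IsSMulRegular (MvPolynomial ℕ K ⧸ relIdeal K k) (rel k : MvPolynomial ℕ K) ∧
      ∀ q ∈ Set.Icc (1 / 2 : ℚ) 1,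
        IsSMulRegular (MvPolynomial ℕ K ⧸ relIdeal K k) (boundaryRel (q : K) k) := by
  induction k using Nat.strong_induction_on with
  | _ k ih =>
    have hrel := fun j hj => (ih j hj).1
    have hbdry := fun j hj => (ih j hj).2
    have hvar := isSMulRegular_var_succ k hrel hbdry
    exact ⟨hvar.mul (isSMulRegular_rel_factor k hrel),
      fun q hq => hvar.mul (isSMulRegular_boundaryRel_factor k hq hrel hbdry)⟩

end Peterson

end

theorem Ideal.map_ofList_take_ofFn {R S : Type*} [CommRing R] [CommRing S] (ι : R →+* S)
    {m i : ℕ} (F : Fin m → R) (f : ℕ → S) (hi : i ≤ m)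
    (hF : ∀ k : Fin m, k.1 < i → ι (F k) = f k) :
    (Ideal.ofList ((List.ofFn F).take i)).map ι = Ideal.span (f '' Set.Iio i) := by
  rw [Ideal.map_ofList]
  refine congrArg Ideal.span (Set.ext fun r => ?_)
  simp only [Set.mem_ofPred_eq, List.mem_map, List.mem_take_iff_getElem, List.getElem_ofFn,
    List.length_ofFn, Set.mem_image, Set.mem_Iio]
  constructor
  · rintro ⟨_, ⟨j, hj, rfl⟩, rfl⟩
    have : j < i := by omega
    exact ⟨j, this, (hF ⟨j, by omega⟩ this).symm⟩
  · rintro ⟨j, hj, rfl⟩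
    exact ⟨_, ⟨j, by omega, rfl⟩, hF ⟨j, by omega⟩ hj⟩

section FiniteVariables

open Peterson

variable {K : Type*} [Field K] {n : ℕ} {ξ : ℕ → MvPolynomial (Fin (n - 1)) K}

theorem rename_succ_apply (hξ : ∀ k : Fin (n - 1), ξ (k.1 + 1) = X k) (hξ0 : ξ 0 = 0)
    {j : ℕ} (hj : j < n) : rename (fun k : Fin (n - 1) => k.1 + 1) (ξ j) = var j := by
  cases j with
  | zero => simp [hξ0]
  | succ j => rw [hξ ⟨j, by omega⟩, rename_X, var_of_ne_zero j.succ_ne_zero]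

theorem rename_succ_relation (hξ : ∀ k : Fin (n - 1), ξ (k.1 + 1) = X k) (hξ0 : ξ 0 = 0)
    {k : ℕ} (hk : k + 2 < n) :
    rename (fun k : Fin (n - 1) => k.1 + 1)
      (ξ (k + 1) * (ξ (k + 1) - C ((1 : K) / 2) * ξ k - C ((1 : K) / 2) * ξ (k + 2))) = rel k := by
  simp only [map_mul, map_sub, rename_C, rename_succ_apply hξ hξ0 (show k + 1 < n by omega),
    rename_succ_apply hξ hξ0 (show k < n by omega), rename_succ_apply hξ hξ0 hk, rel]

theorem rename_succ_last_relation (hξ : ∀ k : Fin (n - 1), ξ (k.1 + 1) = X k) (hξ0 : ξ 0 = 0)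
    (hξn : ξ n = 0) {k : ℕ} (hk : k + 2 = n) :
    rename (fun k : Fin (n - 1) => k.1 + 1)
      (ξ (k + 1) * (ξ (k + 1) - C ((1 : K) / 2) * ξ k - C ((1 : K) / 2) * ξ (k + 2))) =
      boundaryRel 1 k := by
  simp only [map_mul, map_sub, rename_C, rename_succ_apply hξ hξ0 (show k + 1 < n by omega),
    rename_succ_apply hξ hξ0 (show k < n by omega), hk, hξn, mul_zero, sub_zero,
    boundaryRel, map_one, one_mul]

theorem leftInverse_aeval_rename_succ (hξ : ∀ k : Fin (n - 1), ξ (k.1 + 1) = X k) :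
    Function.LeftInverse (aeval ξ) (rename (R := K) fun k : Fin (n - 1) => k.1 + 1) := fun p => by
  rw [aeval_rename, show ξ ∘ (fun k : Fin (n - 1) => k.1 + 1) = X from funext hξ,
    aeval_X_left_apply]

theorem isSMulRegular_quotient_ofList_take_relations [CharZero K]
    (hξ : ∀ k : Fin (n - 1), ξ (k.1 + 1) = X k) (hξ0 : ξ 0 = 0) (hξn : ξ n = 0)
    {i : ℕ} (hi : i < n - 1) :
    IsSMulRegular
      (MvPolynomial (Fin (n - 1)) K ⧸ Ideal.ofList ((List.ofFn fun k : Fin (n - 1) =>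
        ξ (k.1 + 1) * (ξ (k.1 + 1) - C ((1 : K) / 2) * ξ k.1
          - C ((1 : K) / 2) * ξ (k.1 + 2))).take i))
      (ξ (i + 1) * (ξ (i + 1) - C ((1 : K) / 2) * ξ i - C ((1 : K) / 2) * ξ (i + 2))) := by
  refine isSMulRegular_quotient_of_leftInverse (rename fun k : Fin (n - 1) => k.1 + 1).toRingHom
    (aeval ξ).toRingHom (leftInverse_aeval_rename_succ hξ) ?_
  rw [Ideal.map_ofList_take_ofFn _ _ rel hi.le fun k hk => rename_succ_relation hξ hξ0 (by omega)]
  rcases Nat.lt_or_ge (i + 2) n with hin | hin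
  · rw [AlgHom.toRingHom_eq_coe, AlgHom.coe_toRingHom, rename_succ_relation hξ hξ0 hin]
    exact (isSMulRegular_rel_and_boundaryRel i).1
  · rw [AlgHom.toRingHom_eq_coe, AlgHom.coe_toRingHom,
      rename_succ_last_relation hξ hξ0 hξn (by omega)]
    simpa using (isSMulRegular_rel_and_boundaryRel (K := K) i).2 1 (by norm_num)

end FiniteVariables

theorem peterson_relations_regular_sequence_general (n : ℕ)
    (ξ : ℕ → MvPolynomial (Fin (n - 1)) ℂ)
    (hξ : ∀ k : Fin (n - 1), ξ (k.1 + 1) = MvPolynomial.X k)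
    (hξ0 : ξ 0 = 0) (hξn : ξ n = 0) :
    RingTheory.Sequence.IsRegular (MvPolynomial (Fin (n - 1)) ℂ)
      (List.ofFn fun k : Fin (n - 1) =>
        ξ (k.1 + 1) *
          (ξ (k.1 + 1) - MvPolynomial.C ((1:ℂ)/2) * ξ k.1
            - MvPolynomial.C ((1:ℂ)/2) * ξ (k.1 + 2))) := by
  rw [RingTheory.Sequence.isRegular_iff, RingTheory.Sequence.isWeaklyRegular_iff]
  refine ⟨fun i hi => ?_, ?_⟩
  · rw [List.getElem_ofFn, smul_eq_mul, Ideal.mul_top]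
    exact isSMulRegular_quotient_ofList_take_relations hξ hξ0 hξn (by simpa using hi)
  · rw [smul_eq_mul, Ideal.mul_top, ne_comm, ← lt_top_iff_ne_top]
    refine lt_of_le_of_lt (Ideal.span_le.mpr ?_) (RingHom.ker_ne_top constantCoeff).lt_top
    intro r hr
    obtain ⟨k, rfl⟩ := List.mem_ofFn.mp hr
    simp [hξ k]

theorem peterson_relations_regular_sequence (n : ℕ) (hn : 2 ≤ n)
    (ξ : ℕ → MvPolynomial (Fin (n - 1)) ℂ)
    (hξ : ∀ k : Fin (n - 1), ξ (k.1 + 1) = MvPolynomial.X k)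
    (hξ0 : ξ 0 = 0) (hξn : ξ n = 0) :
    RingTheory.Sequence.IsRegular (MvPolynomial (Fin (n - 1)) ℂ)
      (List.ofFn fun k : Fin (n - 1) =>
        ξ (k.1 + 1) *
          (ξ (k.1 + 1) - MvPolynomial.C ((1:ℂ)/2) * ξ k.1
            - MvPolynomial.C ((1:ℂ)/2) * ξ (k.1 + 2))) :=
  peterson_relations_regular_sequence_general n ξ hξ hξ0 hξn
end

section
/- Fix $n \ge 2$ and define, for $w \in S_n$ and $1 \le k \le n-1$, the integer $\sigma_k(w) := \sum_{i=1}^{k}(w(i) - i)$. If $w$ is of block form (there exist $0 = j_0 < j_1 < \cdots < j_m < j_{m+1} = n$ with $w(j_{r-1}+p) = j_r + 1 - p$ for $1 \le p \le j_r - j_{r-1}$), then for every $1 \le k \le n-1$: $\sigma_k(w)\left(\sigma_k(w) - \tfrac12 \sigma_{k-1}(w) - \tfrac12 \sigma_{k+1}(w) - 1\right) = 0$, where $\sigma_0(w) = \sigma_n(w) = 0$. -/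
/-!
On a block `(a, b]` the permutation reverses the segment, so `w i - i` runs through
`b - a - 1, b - a - 3, …, -(b - a - 1)`. Hence `σ (a + p) = σ a + p (b - a - p)`, whose increment vanishes
at `p = b - a`; thus `σ` is zero at every block boundary and is the parabola `p (L - p)` inside a
block of length `L`. A parabola with leading coefficient `-1` has second difference `-2`, which is
exactly the relation `σ k - (σ (k - 1) + σ (k + 1)) / 2 - 1 = 0`; at the block boundaries the
factor `σ k` vanishes instead.
-/

section PartialSums

variable {w : ℕ → ℕ} {σ : ℕ → ℚ}

theorem sigma_succ (hσ : ∀ k, σ k = ∑ i ∈ Finset.Icc 1 k, ((w i : ℚ) - i)) (k : ℕ) :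
    σ (k + 1) = σ k + ((w (k + 1) : ℚ) - (k + 1 : ℕ)) := by
  rw [hσ, hσ, Finset.sum_Icc_succ_top (Nat.le_add_left 1 k)]

theorem sigma_add_of_reversed_block (hσ : ∀ k, σ k = ∑ i ∈ Finset.Icc 1 k, ((w i : ℚ) - i))
    {a b : ℕ} (hrev : ∀ p, 1 ≤ p → p ≤ b - a → w (a + p) = b + 1 - p) {p : ℕ} (hp : p ≤ b - a) :
    σ (a + p) = σ a + p * ((b : ℚ) - a - p) := by
  induction p with
  | zero => simp
  | succ q ih =>
    have hq : q ≤ b := by omega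
    rw [← add_assoc, sigma_succ hσ, ih (by omega), add_assoc a q 1, hrev (q + 1) (by omega) hp,
      show b + 1 - (q + 1) = b - q by omega]
    push_cast [Nat.cast_sub hq]
    ring

theorem sigma_block_boundary_eq_zero (hσ : ∀ k, σ k = ∑ i ∈ Finset.Icc 1 k, ((w i : ℚ) - i))
    {m : ℕ} {j : ℕ → ℕ} (hj0 : j 0 = 0) (hmono : ∀ r, r ≤ m → j r < j (r + 1))
    (hblock : ∀ r, r ≤ m → ∀ p, 1 ≤ p → p ≤ j (r + 1) - j r → w (j r + p) = j (r + 1) + 1 - p) :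
    ∀ s, s ≤ m + 1 → σ (j s) = 0
  | 0, _ => by simp [hσ, hj0]
  | s + 1, hs => by
    have hlt := hmono s (by omega)
    have hstep := sigma_add_of_reversed_block hσ (hblock s (by omega)) le_rfl
    rw [Nat.add_sub_cancel' hlt.le, Nat.cast_sub hlt.le] at hstep
    rw [hstep, sigma_block_boundary_eq_zero hσ hj0 hmono hblock s (by omega)]
    ring

end PartialSums

theorem exists_block_of_mem_Ioc (j : ℕ → ℕ) {k : ℕ} :
    ∀ m, j 0 < k → k ≤ j (m + 1) → ∃ r ≤ m, j r < k ∧ k ≤ j (r + 1)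
  | 0, h0, h1 => ⟨0, le_rfl, h0, h1⟩
  | m + 1, h0, h1 => by
    by_cases hk : k ≤ j (m + 1)
    · obtain ⟨r, hr, hrk⟩ := exists_block_of_mem_Ioc j m h0 hk
      exact ⟨r, by omega, hrk⟩
    · exact ⟨m + 1, le_rfl, by omega, h1⟩

theorem parabola_second_difference (p L : ℚ) :
    p * (L - p) - (p - 1) * (L - (p - 1)) / 2 - (p + 1) * (L - (p + 1)) / 2 - 1 = 0 := by
  ring

theorem block_perm_quadratic_relation_general (n m : ℕ)
    (w : Equiv.Perm ℕ) (j : ℕ → ℕ)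
    (hj0 : j 0 = 0) (hjtop : j (m + 1) = n)
    (hmono : ∀ r : ℕ, r ≤ m → j r < j (r + 1))
    (hblock : ∀ r : ℕ, r ≤ m → ∀ p : ℕ, 1 ≤ p → p ≤ j (r + 1) - j r →
      w (j r + p) = j (r + 1) + 1 - p)
    (σ : ℕ → ℚ)
    (hσ : ∀ k : ℕ, σ k = ∑ i ∈ Finset.Icc 1 k, ((w i : ℚ) - (i : ℚ))) :
    ∀ k : ℕ, 1 ≤ k → k ≤ n - 1 →
      σ k * (σ k - σ (k - 1) / 2 - σ (k + 1) / 2 - 1) = 0 := by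
  intro k hk1 hkn
  have hboundary := sigma_block_boundary_eq_zero hσ hj0 hmono hblock
  obtain ⟨r, hr, hrk, hkr⟩ := exists_block_of_mem_Ioc j m (by omega) (by omega : k ≤ j (m + 1))
  rcases hkr.eq_or_lt with hk_eq | hk_lt
  · rw [hk_eq, hboundary (r + 1) (by omega), zero_mul]
  have hparabola : ∀ p, p ≤ j (r + 1) - j r →
      σ (j r + p) = p * ((j (r + 1) : ℚ) - j r - p) := fun p hp => by
    rw [sigma_add_of_reversed_block hσ (hblock r hr) hp, hboundary r (by omega), zero_add]
  obtain ⟨p, rfl⟩ : ∃ p, k = j r + p := ⟨k - j r, by omega⟩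
  rw [show j r + p - 1 = j r + (p - 1) by omega, show j r + p + 1 = j r + (p + 1) by omega,
    hparabola p (by omega), hparabola (p - 1) (by omega), hparabola (p + 1) (by omega)]
  push_cast [Nat.cast_sub (by omega : 1 ≤ p)]
  rw [parabola_second_difference, mul_zero]

theorem block_perm_quadratic_relation (n m : ℕ) (hn : 2 ≤ n)
    (w : Equiv.Perm ℕ) (j : ℕ → ℕ)
    (hj0 : j 0 = 0) (hjtop : j (m + 1) = n)
    (hmono : ∀ r : ℕ, r ≤ m → j r < j (r + 1))
    (hjm : j m < n)
    (hblock : ∀ r : ℕ, r ≤ m → ∀ p : ℕ, 1 ≤ p → p ≤ j (r + 1) - j r →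
      w (j r + p) = j (r + 1) + 1 - p)
    (σ : ℕ → ℚ)
    (hσ : ∀ k : ℕ, σ k = ∑ i ∈ Finset.Icc 1 k, ((w i : ℚ) - (i : ℚ))) :
    ∀ k : ℕ, 1 ≤ k → k ≤ n - 1 →
      σ k * (σ k - σ (k - 1) / 2 - σ (k + 1) / 2 - 1) = 0 :=
  block_perm_quadratic_relation_general n m w j hj0 hjtop hmono hblock σ hσ
end

section
/- Let $q \ge 2$ and let $z_1, \dots, z_q$ be real numbers satisfying $z_i^2 = \tfrac12 z_i (z_{i-1} + z_{i+1})$ for all $1 \le i \le q$, with the convention $z_0 = z_{q+1} = 0$. Then $z_i = 0$ for all $i$. -/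
theorem peterson_system_real_only_trivial_solution (q : ℕ) (hq : 2 ≤ q)
    (z : ℕ → ℝ) (hz0 : z 0 = 0) (hzq : z (q + 1) = 0)
    (hsys : ∀ i : ℕ, 1 ≤ i → i ≤ q →
      z i ^ 2 = (1/2 : ℝ) * z i * (z (i - 1) + z (i + 1))) :
    ∀ i : ℕ, 1 ≤ i → i ≤ q → z i = 0 := by
  have key : ∑ i ∈ Finset.range (q + 1), (z (i + 1) - z i) ^ 2 = 0 := by
    have h1 : ∑ i ∈ Finset.range (q + 1), (z (i + 1) - z i) ^ 2
        = ∑ i ∈ Finset.range (q + 1), (z i ^ 2 - z i * z (i + 1))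
          + ∑ i ∈ Finset.range (q + 1), (z (i + 1) ^ 2 - z i * z (i + 1)) := by
      rw [← Finset.sum_add_distrib]
      exact Finset.sum_congr rfl fun i _ => by ring
    have h2 : ∑ i ∈ Finset.range (q + 1), (z i ^ 2 - z i * z (i + 1))
        = ∑ i ∈ Finset.range q, (z (i + 1) ^ 2 - z (i + 1) * z (i + 2)) := by
      rw [Finset.sum_range_succ' (fun i => z i ^ 2 - z i * z (i + 1)) q]
      simp [hz0]
    have h3 : ∑ i ∈ Finset.range (q + 1), (z (i + 1) ^ 2 - z i * z (i + 1))
        = ∑ i ∈ Finset.range q, (z (i + 1) ^ 2 - z i * z (i + 1)) := by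
      rw [Finset.sum_range_succ]
      simp [hzq]
    rw [h1, h2, h3, ← Finset.sum_add_distrib]
    apply Finset.sum_eq_zero
    intro i hi
    have hiq : i + 1 ≤ q := Finset.mem_range.mp hi
    have h := hsys (i + 1) (Nat.le_add_left 1 i) hiq
    simp only [Nat.add_sub_cancel] at h
    have : z (i + 1) ^ 2 = (1/2 : ℝ) * z (i + 1) * (z i + z (i + 2)) := h
    nlinarith [this]
  have heq : ∀ i ∈ Finset.range (q + 1), (z (i + 1) - z i) ^ 2 = 0 := by
    intro i hi
    have := (Finset.sum_eq_zero_iff_of_nonneg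
      (fun j _ => sq_nonneg (z (j + 1) - z j))).mp key
    exact this i hi
  have hall : ∀ i, i ≤ q + 1 → z i = 0 := by
    intro i
    induction i with
    | zero => intro _; exact hz0
    | succ n ih =>
      intro hn
      have hn' : n < q + 1 := Nat.lt_of_succ_le hn
      have h := heq n (Finset.mem_range.mpr hn')
      have hz : z (n + 1) = z n := by
        have := pow_eq_zero_iff (n := 2) (by norm_num) |>.mp h
        linarith [sub_eq_zero.mp this]
      rw [hz]
      exact ih (Nat.le_of_lt hn')
  intro i _ hi
  exact hall i (Nat.le_succ_of_le hi)
end
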